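/- (Coproduct.) Let g = g₀ ⊕ g₁ be an elementary Lie algebra of order three over ℂ, U(g) its universal enveloping algebra with canonical map ι, and q ∈ ℂ a primitive cube root of unity. Suppose 𝒜 : ℤ/3ℤ → Submodule ℂ U(g) is a grading making U(g) a ℤ₃-graded algebra such that ι(x,0) ∈ 𝒜₀ for all x ∈ g₀ and ι(0,y) ∈ 𝒜₁ for all y ∈ g₁, and let • be the twisted product on U(g) ⊗_ℂ U(g) determined by (a⊗c) • (b⊗d) = q^{|b||c|} (ab) ⊗ (cd) for homogeneous b, c. Then there exists a unique ℂ-algebra homomorphism Δ : U(g) → (U(g) ⊗_ℂ U(g), •) such that Δ(ι z) = ι z ⊗ 1 + 1 ⊗ ι z for every z ∈ g₀ ⊕ g₁. -/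

import Mathlib

variable {g₀ g₁ : Type*} [LieRing g₀] [LieAlgebra ℂ g₀]
  [AddCommGroup g₁] [Module ℂ g₁] [LieRingModule g₀ g₁] [LieModule ℂ g₀ g₁]

/-- The relation on the tensor algebra `T(g₀ ⊕ g₁)` whose quotient is the
universal enveloping algebra of an elementary Lie algebra of order three
`g = g₀ ⊕ g₁` with ternary bracket `t`. -/
def envRel (t : g₁ →ₗ[ℂ] g₁ →ₗ[ℂ] g₁ →ₗ[ℂ] g₀) :
    TensorAlgebra ℂ (g₀ × g₁) → TensorAlgebra ℂ (g₀ × g₁) → Prop :=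
  fun a b =>
    (∃ x₁ x₂ : g₀,
      a = TensorAlgebra.ι ℂ ((x₁, 0) : g₀ × g₁) * TensorAlgebra.ι ℂ ((x₂, 0) : g₀ × g₁) ∧
      b = TensorAlgebra.ι ℂ ((x₂, 0) : g₀ × g₁) * TensorAlgebra.ι ℂ ((x₁, 0) : g₀ × g₁) +
        TensorAlgebra.ι ℂ ((⁅x₁, x₂⁆, 0) : g₀ × g₁)) ∨
    (∃ (x : g₀) (y : g₁),
      a = TensorAlgebra.ι ℂ ((x, 0) : g₀ × g₁) * TensorAlgebra.ι ℂ ((0, y) : g₀ × g₁) ∧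
      b = TensorAlgebra.ι ℂ ((0, y) : g₀ × g₁) * TensorAlgebra.ι ℂ ((x, 0) : g₀ × g₁) +
        TensorAlgebra.ι ℂ ((0, ⁅x, y⁆) : g₀ × g₁)) ∨
    (∃ y : Fin 3 → g₁,
      a = ∑ σ : Equiv.Perm (Fin 3),
        TensorAlgebra.ι ℂ ((0, y (σ 0)) : g₀ × g₁) *
        TensorAlgebra.ι ℂ ((0, y (σ 1)) : g₀ × g₁) *
        TensorAlgebra.ι ℂ ((0, y (σ 2)) : g₀ × g₁) ∧
      b = TensorAlgebra.ι ℂ ((t (y 0) (y 1) (y 2), 0) : g₀ × g₁))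

/-- The universal enveloping algebra `U(g)` of an elementary Lie algebra of
order three, as a quotient of the tensor algebra `T(g₀ ⊕ g₁)`. -/
def UEnv (t : g₁ →ₗ[ℂ] g₁ →ₗ[ℂ] g₁ →ₗ[ℂ] g₀) : Type _ := RingQuot (envRel t)

noncomputable instance (t : g₁ →ₗ[ℂ] g₁ →ₗ[ℂ] g₁ →ₗ[ℂ] g₀) : Ring (UEnv t) :=
  inferInstanceAs (Ring (RingQuot (envRel t)))

noncomputable instance (t : g₁ →ₗ[ℂ] g₁ →ₗ[ℂ] g₁ →ₗ[ℂ] g₀) : Algebra ℂ (UEnv t) :=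
  inferInstanceAs (Algebra ℂ (RingQuot (envRel t)))

/-- The canonical map `ι : g₀ ⊕ g₁ → U(g)`. -/
noncomputable def envι (t : g₁ →ₗ[ℂ] g₁ →ₗ[ℂ] g₁ →ₗ[ℂ] g₀) (z : g₀ × g₁) : UEnv t :=
  RingQuot.mkAlgHom ℂ (envRel t) (TensorAlgebra.ι ℂ z)

open TensorProduct

/-- The defining property of the twisted multiplication on `U(g) ⊗ U(g)`:
`(a⊗c) • (b⊗d) = q^{|b||c|} (ab) ⊗ (cd)` for homogeneous `b, c`. -/
def IsTwistedMul (t : g₁ →ₗ[ℂ] g₁ →ₗ[ℂ] g₁ →ₗ[ℂ] g₀)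
    (𝒜 : ZMod 3 → Submodule ℂ (UEnv t)) (q : ℂ)
    (m : (UEnv t ⊗[ℂ] UEnv t) →ₗ[ℂ] (UEnv t ⊗[ℂ] UEnv t) →ₗ[ℂ]
      (UEnv t ⊗[ℂ] UEnv t)) : Prop :=
  ∀ (a b c d : UEnv t) (j k : ZMod 3), b ∈ 𝒜 j → c ∈ 𝒜 k →
    m (a ⊗ₜ[ℂ] c) (b ⊗ₜ[ℂ] d) = q ^ (j.val * k.val) • ((a * b) ⊗ₜ[ℂ] (c * d))

/-! `U(g)` is presented by generators and relations, so an algebra map out of it is the same as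
a linear map on `g₀ ⊕ g₁` whose values satisfy the defining relations, and it is determined by
these values. The twisted product is associative with unit `1 ⊗ 1` because `(j, k) ↦ q^{jk}` is
a bicharacter of `ℤ/3`. Sending every generator to the primitive element `z ⊗ 1 + 1 ⊗ z`
respects the relations: a primitive element of degree `0` does not see the twist, so
commutators involving it stay primitive; and in the symmetrised product of three primitive
elements of degree `1` the mixed terms come with the weights `1 + q + q² = 0`. -/

theorem one_add_add_sq_eq_zero_of_pow_three_eq_one {K : Type*} [CommRing K] [NoZeroDivisors K]
    {q : K} (hq3 : q ^ 3 = 1) (hq1 : q ≠ 1) : 1 + q + q ^ 2 = 0 := by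
  have h : (q - 1) * (1 + q + q ^ 2) = 0 := by linear_combination hq3
  exact (mul_eq_zero.mp h).resolve_left (sub_ne_zero.mpr hq1)

theorem pow_eq_pow_of_natCast_eq {M : Type*} [Monoid M] {n : ℕ} {q : M} (hq : q ^ n = 1)
    {a b : ℕ} (h : (a : ZMod n) = b) : q ^ a = q ^ b :=
  pow_eq_pow_of_modEq ((ZMod.natCast_eq_natCast_iff a b n).mp h) hq

section BilinMulAlg

variable {R M : Type*} [CommRing R] [AddCommGroup M] [Module R M]

structure IsUnitalAssoc (m : M →ₗ[R] M →ₗ[R] M) (e : M) : Prop where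
  assoc : ∀ u v w, m (m u v) w = m u (m v w)
  one_mul : ∀ u, m e u = u
  mul_one : ∀ u, m u e = u

-- A type synonym, since `M` may already carry another product (`A ⊗ A` carries the untwisted one).
def BilinMulAlg (m : M →ₗ[R] M →ₗ[R] M) (e : M) (_ : IsUnitalAssoc m e) : Type _ := M

namespace BilinMulAlg

variable {m : M →ₗ[R] M →ₗ[R] M} {e : M} (h : IsUnitalAssoc m e)

instance : AddCommGroup (BilinMulAlg m e h) := inferInstanceAs (AddCommGroup M)

instance : Module R (BilinMulAlg m e h) := inferInstanceAs (Module R M)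

instance : Ring (BilinMulAlg m e h) :=
  { (inferInstance : AddCommGroup (BilinMulAlg m e h)) with
    mul := fun u v => m u v
    one := e
    natCast := fun n => n • e
    natCast_zero := zero_nsmul e
    natCast_succ := fun n => succ_nsmul e n
    intCast := fun n => n • e
    intCast_ofNat := fun n => natCast_zsmul e n
    intCast_negSucc := fun n => negSucc_zsmul e n
    left_distrib := fun u v w => map_add (m u) v w
    right_distrib := fun u v w => LinearMap.map_add₂ m u v w
    zero_mul := fun u => LinearMap.map_zero₂ m u
    mul_zero := fun u => map_zero (m u)
    mul_assoc := h.assoc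
    one_mul := h.one_mul
    mul_one := h.mul_one }

instance : Algebra R (BilinMulAlg m e h) :=
  Algebra.ofModule (fun r u v => LinearMap.map_smul₂ m r u v) (fun r u v => map_smul (m u) r v)

def of : M ≃ₗ[R] BilinMulAlg m e h := LinearEquiv.refl R M

theorem of_mul_of (u v : M) : of h u * of h v = of h (m u v) := rfl

theorem of_symm_mul (u v : BilinMulAlg m e h) :
    (of h).symm (u * v) = m ((of h).symm u) ((of h).symm v) := rfl

end BilinMulAlg

end BilinMulAlg

section Homogeneous

variable {R A M ι : Type*} [CommSemiring R] [AddCommMonoid A] [Module R A] [AddCommMonoid M]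
  [Module R M] [DecidableEq ι] (𝒜 : ι → Submodule R A) [DirectSum.Decomposition 𝒜]

theorem TensorProduct.ext_homogeneous {f g : A ⊗[R] A →ₗ[R] M}
    (h : ∀ i j (a c : A), a ∈ 𝒜 i → c ∈ 𝒜 j → f (a ⊗ₜ c) = g (a ⊗ₜ c)) : f = g := by
  refine TensorProduct.ext' fun a c => ?_
  induction a using DirectSum.Decomposition.inductionOn 𝒜 with
  | zero => simp
  | add a a' ha ha' => simp only [add_tmul, map_add, ha, ha']
  | homogeneous a =>
    induction c using DirectSum.Decomposition.inductionOn 𝒜 with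
    | zero => simp
    | add c c' hc hc' => simp only [tmul_add, map_add, hc, hc']
    | homogeneous c => exact h _ _ _ _ a.2 c.2

end Homogeneous

section TwistedMul

variable {R A : Type*} [CommRing R] [Ring A] [Algebra R A]

variable (R A) in
def primitiveTensor : A →ₗ[R] A ⊗[R] A :=
  (TensorProduct.mk R A A).flip 1 + TensorProduct.mk R A A 1

@[simp]
theorem primitiveTensor_apply (u : A) : primitiveTensor R A u = u ⊗ₜ 1 + 1 ⊗ₜ u := rfl

variable {n : ℕ} (𝒜 : ZMod n → Submodule R A) [GradedAlgebra 𝒜] (q : R)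

def IsGradedTwistedMul (m : A ⊗[R] A →ₗ[R] A ⊗[R] A →ₗ[R] A ⊗[R] A) : Prop :=
  ∀ (a b c d : A) (j k : ZMod n), b ∈ 𝒜 j → c ∈ 𝒜 k →
    m (a ⊗ₜ c) (b ⊗ₜ d) = q ^ (j.val * k.val) • ((a * b) ⊗ₜ (c * d))

namespace IsGradedTwistedMul

variable {𝒜 q} {m : A ⊗[R] A →ₗ[R] A ⊗[R] A →ₗ[R] A ⊗[R] A}

theorem assoc_tmul [NeZero n] (hm : IsGradedTwistedMul 𝒜 q m) (hq : q ^ n = 1) (a f : A)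
    {b c d e : A} {jb jc jd je : ZMod n} (hb : b ∈ 𝒜 jb) (hc : c ∈ 𝒜 jc) (hd : d ∈ 𝒜 jd)
    (he : e ∈ 𝒜 je) :
    m (m (a ⊗ₜ c) (b ⊗ₜ d)) (e ⊗ₜ f) = m (a ⊗ₜ c) (m (b ⊗ₜ d) (e ⊗ₜ f)) := by
  rw [hm a b c d jb jc hb hc, map_smul, LinearMap.smul_apply,
    hm _ e _ f je (jc + jd) he (SetLike.mul_mem_graded hc hd), hm b e d f je jd he hd, map_smul,
    hm a _ c _ (jb + je) jc (SetLike.mul_mem_graded hb he) hc, smul_smul, smul_smul,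
    ← pow_add, ← pow_add, mul_assoc, mul_assoc]
  congr 1
  refine pow_eq_pow_of_natCast_eq hq ?_
  push_cast [ZMod.natCast_zmod_val]
  ring

theorem assoc [NeZero n] (hm : IsGradedTwistedMul 𝒜 q m) (hq : q ^ n = 1) (u v w : A ⊗[R] A) :
    m (m u v) w = m u (m v w) := by
  suffices h : (m.flip w).comp (m.flip v) = m.flip (m v w) from LinearMap.congr_fun h u
  refine TensorProduct.ext_homogeneous 𝒜 fun _ _ a c _ hc => ?_
  suffices h : (m.flip w).comp (m (a ⊗ₜ c)) = (m (a ⊗ₜ c)).comp (m.flip w) from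
    LinearMap.congr_fun h v
  refine TensorProduct.ext_homogeneous 𝒜 fun _ _ b d hb hd => ?_
  suffices h : m (m (a ⊗ₜ c) (b ⊗ₜ d)) = (m (a ⊗ₜ c)).comp (m (b ⊗ₜ d)) from
    LinearMap.congr_fun h w
  refine TensorProduct.ext_homogeneous 𝒜 fun _ _ e f he _ => ?_
  exact hm.assoc_tmul hq a f hb hc hd he

theorem isUnitalAssoc [NeZero n] (hm : IsGradedTwistedMul 𝒜 q m) (hq : q ^ n = 1) :
    IsUnitalAssoc m (1 ⊗ₜ 1) where
  assoc := hm.assoc hq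
  one_mul u := by
    suffices h : m (1 ⊗ₜ 1) = LinearMap.id from LinearMap.congr_fun h u
    refine TensorProduct.ext_homogeneous 𝒜 fun _ _ b d hb _ => ?_
    simp [hm 1 b 1 d _ 0 hb (SetLike.one_mem_graded 𝒜)]
  mul_one u := by
    suffices h : m.flip (1 ⊗ₜ 1) = LinearMap.id from LinearMap.congr_fun h u
    refine TensorProduct.ext_homogeneous 𝒜 fun _ _ a c _ hc => ?_
    simp [hm a 1 c 1 0 _ (SetLike.one_mem_graded 𝒜) hc]

theorem map_primitiveTensor (hm : IsGradedTwistedMul 𝒜 q m) {u v : A} {ju jv : ZMod n}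
    (hu : u ∈ 𝒜 ju) (hv : v ∈ 𝒜 jv) :
    m (primitiveTensor R A u) (primitiveTensor R A v) =
      primitiveTensor R A (u * v) + u ⊗ₜ v + q ^ (jv.val * ju.val) • v ⊗ₜ u := by
  have h1 : (1 : A) ∈ 𝒜 0 := SetLike.one_mem_graded 𝒜
  simp only [primitiveTensor_apply, map_add, LinearMap.add_apply]
  rw [hm u v 1 1 jv 0 hv h1, hm u 1 1 v 0 0 h1 h1, hm 1 v u 1 jv ju hv hu,
    hm 1 1 u v 0 ju h1 hu]
  simp only [ZMod.val_zero, mul_zero, zero_mul, pow_zero, one_smul, mul_one, one_mul]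
  abel

theorem map_primitiveTensor_of_mem_zero (hm : IsGradedTwistedMul 𝒜 q m) {u v : A} {j : ZMod n}
    (hu : u ∈ 𝒜 0) (hv : v ∈ 𝒜 j) :
    m (primitiveTensor R A u) (primitiveTensor R A v) =
      m (primitiveTensor R A v) (primitiveTensor R A u) + primitiveTensor R A (u * v - v * u) := by
  rw [hm.map_primitiveTensor hu hv, hm.map_primitiveTensor hv hu, map_sub]
  simp only [ZMod.val_zero, mul_zero, zero_mul, pow_zero, one_smul]
  abel

end IsGradedTwistedMul

end TwistedMul

section OrderThree

variable {R A : Type*} [CommRing R] [Ring A] [Algebra R A] {𝒜 : ZMod 3 → Submodule R A}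
  [GradedAlgebra 𝒜] {q : R} {m : A ⊗[R] A →ₗ[R] A ⊗[R] A →ₗ[R] A ⊗[R] A}

namespace IsGradedTwistedMul

theorem map_map_primitiveTensor (hm : IsGradedTwistedMul 𝒜 q m) {u v w : A}
    (hu : u ∈ 𝒜 1) (hv : v ∈ 𝒜 1) (hw : w ∈ 𝒜 1) :
    m (m (primitiveTensor R A u) (primitiveTensor R A v)) (primitiveTensor R A w) =
      primitiveTensor R A (u * v * w)
        + ((u * v) ⊗ₜ w + q • (u * w) ⊗ₜ v + q ^ 2 • (v * w) ⊗ₜ u)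
        + (u ⊗ₜ (v * w) + q • v ⊗ₜ (u * w) + q ^ 2 • w ⊗ₜ (u * v)) := by
  have h1 : (1 : A) ∈ 𝒜 0 := SetLike.one_mem_graded 𝒜
  have huv : u * v ∈ 𝒜 2 := SetLike.mul_mem_graded hu hv
  rw [hm.map_primitiveTensor hu hv]
  simp only [primitiveTensor_apply, map_add, LinearMap.add_apply, map_smul, LinearMap.smul_apply]
  rw [hm (u * v) w 1 1 1 0 hw h1, hm (u * v) 1 1 w 0 0 h1 h1, hm u w v 1 1 1 hw hv,
    hm u 1 v w 0 1 h1 hv, hm v w u 1 1 1 hw hu, hm v 1 u w 0 1 h1 hu,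
    hm 1 w (u * v) 1 1 2 hw huv, hm 1 1 (u * v) w 0 2 h1 huv]
  simp only [ZMod.val_zero, ZMod.val_one, show (2 : ZMod 3).val = 2 from rfl, mul_zero,
    zero_mul, mul_one, one_mul, pow_zero, pow_one, one_smul, smul_smul]
  match_scalars <;> ring

theorem sum_perm_map_map_primitiveTensor (hm : IsGradedTwistedMul 𝒜 q m)
    (hq : 1 + q + q ^ 2 = 0) {y : Fin 3 → A} (hy : ∀ i, y i ∈ 𝒜 1) :
    ∑ σ : Equiv.Perm (Fin 3),
        m (m (primitiveTensor R A (y (σ 0))) (primitiveTensor R A (y (σ 1))))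
          (primitiveTensor R A (y (σ 2))) =
      primitiveTensor R A (∑ σ : Equiv.Perm (Fin 3), y (σ 0) * y (σ 1) * y (σ 2)) := by
  have reindex (F : Fin 3 → Fin 3 → Fin 3 → A ⊗[R] A) (τ : Equiv.Perm (Fin 3)) :
      ∑ σ : Equiv.Perm (Fin 3), F (σ (τ 0)) (σ (τ 1)) (σ (τ 2)) =
        ∑ σ : Equiv.Perm (Fin 3), F (σ 0) (σ 1) (σ 2) :=
    Equiv.sum_comp (Equiv.mulRight τ) fun σ => F (σ 0) (σ 1) (σ 2)
  set S₁ := ∑ σ : Equiv.Perm (Fin 3), (y (σ 0) * y (σ 1)) ⊗ₜ[R] y (σ 2)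
  set S₂ := ∑ σ : Equiv.Perm (Fin 3), y (σ 0) ⊗ₜ[R] (y (σ 1) * y (σ 2))
  have h₁₂ : ∑ σ : Equiv.Perm (Fin 3), (y (σ 0) * y (σ 2)) ⊗ₜ[R] y (σ 1) = S₁ :=
    reindex (fun i j k => (y i * y j) ⊗ₜ y k) (Equiv.swap 1 2)
  have h₁₀ : ∑ σ : Equiv.Perm (Fin 3), (y (σ 1) * y (σ 2)) ⊗ₜ[R] y (σ 0) = S₁ :=
    reindex (fun i j k => (y i * y j) ⊗ₜ y k) (finRotate 3)
  have h₂₁ : ∑ σ : Equiv.Perm (Fin 3), y (σ 1) ⊗ₜ[R] (y (σ 0) * y (σ 2)) = S₂ :=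
    reindex (fun i j k => y i ⊗ₜ (y j * y k)) (Equiv.swap 0 1)
  have h₂₂ : ∑ σ : Equiv.Perm (Fin 3), y (σ 2) ⊗ₜ[R] (y (σ 0) * y (σ 1)) = S₂ :=
    reindex (fun i j k => y i ⊗ₜ (y j * y k)) (finRotate 3)⁻¹
  simp only [hm.map_map_primitiveTensor (hy _) (hy _) (hy _), Finset.sum_add_distrib,
    ← Finset.smul_sum, map_sum, h₁₂, h₁₀, h₂₁, h₂₂]
  have hS (S : A ⊗[R] A) : S + q • S + q ^ 2 • S = 0 := by
    rw [← one_smul R S, smul_smul, smul_smul, ← add_smul, ← add_smul, mul_one, mul_one, hq,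
      zero_smul]
  rw [hS, hS, add_zero, add_zero]

end IsGradedTwistedMul

end OrderThree

section EnvelopingAlgebra

variable {g₀ g₁ : Type*} [LieRing g₀] [LieAlgebra ℂ g₀] [AddCommGroup g₁] [Module ℂ g₁]
  [LieRingModule g₀ g₁] (t : g₁ →ₗ[ℂ] g₁ →ₗ[ℂ] g₁ →ₗ[ℂ] g₀)

noncomputable def envπ : TensorAlgebra ℂ (g₀ × g₁) →ₐ[ℂ] UEnv t :=
  RingQuot.mkAlgHom ℂ (envRel t)

theorem envπ_surjective : Function.Surjective (envπ t) := RingQuot.mkAlgHom_surjective ℂ _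

theorem envπ_eq_of_envRel {a b : TensorAlgebra ℂ (g₀ × g₁)} (h : envRel t a b) :
    envπ t a = envπ t b :=
  RingQuot.mkAlgHom_rel ℂ h

noncomputable def envιₗ : g₀ × g₁ →ₗ[ℂ] UEnv t := (envπ t).toLinearMap ∘ₗ TensorAlgebra.ι ℂ

theorem envπ_ι (z : g₀ × g₁) : envπ t (TensorAlgebra.ι ℂ z) = envι t z := rfl

theorem envι_even_commutator (x₁ x₂ : g₀) :
    envι t ((x₁, 0) : g₀ × g₁) * envι t ((x₂, 0) : g₀ × g₁) -
      envι t ((x₂, 0) : g₀ × g₁) * envι t ((x₁, 0) : g₀ × g₁) =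
        envι t ((⁅x₁, x₂⁆, 0) : g₀ × g₁) := by
  have h := envπ_eq_of_envRel t (Or.inl ⟨x₁, x₂, rfl, rfl⟩)
  rw [map_mul, map_add, map_mul] at h
  exact sub_eq_of_eq_add' h

theorem envι_even_odd_commutator (x : g₀) (y : g₁) :
    envι t ((x, 0) : g₀ × g₁) * envι t ((0, y) : g₀ × g₁) -
      envι t ((0, y) : g₀ × g₁) * envι t ((x, 0) : g₀ × g₁) =
        envι t ((0, ⁅x, y⁆) : g₀ × g₁) := by
  have h := envπ_eq_of_envRel t (Or.inr (Or.inl ⟨x, y, rfl, rfl⟩))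
  rw [map_mul, map_add, map_mul] at h
  exact sub_eq_of_eq_add' h

theorem sum_perm_envι_odd (y : Fin 3 → g₁) :
    ∑ σ : Equiv.Perm (Fin 3),
      envι t ((0, y (σ 0)) : g₀ × g₁) * envι t ((0, y (σ 1)) : g₀ × g₁) *
        envι t ((0, y (σ 2)) : g₀ × g₁) =
      envι t ((t (y 0) (y 1) (y 2), 0) : g₀ × g₁) := by
  have h := envπ_eq_of_envRel t (Or.inr (Or.inr ⟨y, rfl, rfl⟩))
  simpa only [map_sum, map_mul, envπ_ι] using h

theorem UEnv.induction {P : UEnv t → Prop} (algebraMap : ∀ r : ℂ, P (algebraMap ℂ (UEnv t) r))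
    (ι : ∀ z, P (envι t z)) (mul : ∀ u v, P u → P v → P (u * v))
    (add : ∀ u v, P u → P v → P (u + v)) (u : UEnv t) : P u := by
  obtain ⟨a, rfl⟩ := envπ_surjective t u
  induction a using TensorAlgebra.induction with
  | algebraMap r => simpa only [AlgHom.commutes] using algebraMap r
  | ι z => exact ι z
  | mul a b ha hb => simpa only [map_mul] using mul _ _ ha hb
  | add a b ha hb => simpa only [map_add] using add _ _ ha hb

theorem UEnv.linearMap_ext {M : Type*} [AddCommGroup M] [Module ℂ M] (m : M →ₗ[ℂ] M →ₗ[ℂ] M)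
    {f g : UEnv t →ₗ[ℂ] M} (h1 : f 1 = g 1) (hf : ∀ u v, f (u * v) = m (f u) (f v))
    (hg : ∀ u v, g (u * v) = m (g u) (g v)) (hι : ∀ z, f (envι t z) = g (envι t z)) : f = g := by
  ext u
  induction u using UEnv.induction t with
  | algebraMap r => rw [Algebra.algebraMap_eq_smul_one, map_smul, map_smul, h1]
  | ι z => exact hι z
  | mul u v hu hv => rw [hf, hg, hu, hv]
  | add u v hu hv => rw [map_add, map_add, hu, hv]

variable {t} {𝒜 : ZMod 3 → Submodule ℂ (UEnv t)} [GradedAlgebra 𝒜] {q : ℂ}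
  {m : UEnv t ⊗[ℂ] UEnv t →ₗ[ℂ] UEnv t ⊗[ℂ] UEnv t →ₗ[ℂ] UEnv t ⊗[ℂ] UEnv t}
  (hm : IsGradedTwistedMul 𝒜 q m) (hq3 : q ^ 3 = 1)

noncomputable def primitiveLift :
    TensorAlgebra ℂ (g₀ × g₁) →ₐ[ℂ] BilinMulAlg m _ (hm.isUnitalAssoc hq3) :=
  TensorAlgebra.lift ℂ ((BilinMulAlg.of _).toLinearMap ∘ₗ primitiveTensor ℂ (UEnv t) ∘ₗ envιₗ t)

theorem primitiveLift_ι (z : g₀ × g₁) :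
    primitiveLift hm hq3 (TensorAlgebra.ι ℂ z) =
      BilinMulAlg.of _ (primitiveTensor ℂ _ (envι t z)) :=
  TensorAlgebra.lift_ι_apply _ z

theorem primitiveLift_eq_of_envRel (hq0 : 1 + q + q ^ 2 = 0)
    (h0 : ∀ x : g₀, envι t ((x, 0) : g₀ × g₁) ∈ 𝒜 0)
    (h1 : ∀ y : g₁, envι t ((0, y) : g₀ × g₁) ∈ 𝒜 1) ⦃a b : TensorAlgebra ℂ (g₀ × g₁)⦄
    (hab : envRel t a b) : primitiveLift hm hq3 a = primitiveLift hm hq3 b := by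
  rcases hab with ⟨x₁, x₂, rfl, rfl⟩ | ⟨x, y, rfl, rfl⟩ | ⟨y, rfl, rfl⟩
  · simp only [map_mul, map_add, primitiveLift_ι, BilinMulAlg.of_mul_of]
    rw [hm.map_primitiveTensor_of_mem_zero (h0 x₁) (h0 x₂), envι_even_commutator, map_add]
  · simp only [map_mul, map_add, primitiveLift_ι, BilinMulAlg.of_mul_of]
    rw [hm.map_primitiveTensor_of_mem_zero (h0 x) (h1 y), envι_even_odd_commutator, map_add]
  · rw [map_sum]
    simp only [map_mul, primitiveLift_ι, BilinMulAlg.of_mul_of]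
    rw [← map_sum, hm.sum_perm_map_map_primitiveTensor hq0 fun i => h1 (y i), sum_perm_envι_odd]

end EnvelopingAlgebra

theorem coproduct_exists_unique_general (t : g₁ →ₗ[ℂ] g₁ →ₗ[ℂ] g₁ →ₗ[ℂ] g₀)
    (q : ℂ) (hq3 : q ^ 3 = 1) (hq1 : q ≠ 1)
    (𝒜 : ZMod 3 → Submodule ℂ (UEnv t)) [GradedAlgebra 𝒜]
    (h0 : ∀ x : g₀, envι t ((x, 0) : g₀ × g₁) ∈ 𝒜 0)
    (h1 : ∀ y : g₁, envι t ((0, y) : g₀ × g₁) ∈ 𝒜 1)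
    (m : (UEnv t ⊗[ℂ] UEnv t) →ₗ[ℂ] (UEnv t ⊗[ℂ] UEnv t) →ₗ[ℂ]
      (UEnv t ⊗[ℂ] UEnv t))
    (hm : IsTwistedMul t 𝒜 q m) :
    ∃! Δ : UEnv t →ₗ[ℂ] (UEnv t ⊗[ℂ] UEnv t),
      Δ 1 = (1 : UEnv t) ⊗ₜ[ℂ] (1 : UEnv t) ∧
      (∀ u v : UEnv t, Δ (u * v) = m (Δ u) (Δ v)) ∧
      (∀ z : g₀ × g₁,
        Δ (envι t z) = envι t z ⊗ₜ[ℂ] (1 : UEnv t) + (1 : UEnv t) ⊗ₜ[ℂ] envι t z) := by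
  have hm' : IsGradedTwistedMul 𝒜 q m := hm
  let h := hm'.isUnitalAssoc hq3
  let Δ : UEnv t →ₐ[ℂ] BilinMulAlg m _ h := RingQuot.liftAlgHom ℂ ⟨primitiveLift hm' hq3,
    primitiveLift_eq_of_envRel hm' hq3 (one_add_add_sq_eq_zero_of_pow_three_eq_one hq3 hq1) h0 h1⟩
  let Δₗ := (BilinMulAlg.of h).symm.toLinearMap ∘ₗ Δ.toLinearMap
  have hmul (u v : UEnv t) : Δₗ (u * v) = m (Δₗ u) (Δₗ v) := by
    simp [Δₗ, BilinMulAlg.of_symm_mul]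
  have hι (z : g₀ × g₁) : Δₗ (envι t z) = envι t z ⊗ₜ 1 + 1 ⊗ₜ envι t z :=
    congrArg (BilinMulAlg.of h).symm
      ((RingQuot.liftAlgHom_mkAlgHom_apply ℂ _ _ _).trans (primitiveLift_ι hm' hq3 z))
  have hone : Δₗ 1 = 1 ⊗ₜ 1 := congrArg (BilinMulAlg.of h).symm (map_one Δ)
  refine ⟨Δₗ, ⟨hone, hmul, hι⟩, ?_⟩
  rintro Δ' ⟨hone', hmul', hι'⟩
  exact UEnv.linearMap_ext t m (hone'.trans hone.symm) hmul' hmul fun z =>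
    (hι' z).trans (hι z).symm

/-- (Coproduct.) There is a unique `ℂ`-algebra homomorphism
`Δ : U(g) → (U(g) ⊗ U(g), •)` into the twisted tensor product on which every
element of the image of `g₀ ⊕ g₁` is primitive: `Δ(ι z) = ι z ⊗ 1 + 1 ⊗ ι z`. -/
theorem coproduct_exists_unique (t : g₁ →ₗ[ℂ] g₁ →ₗ[ℂ] g₁ →ₗ[ℂ] g₀)
    (hsymm : ∀ y₁ y₂ y₃ : g₁, t y₁ y₂ y₃ = t y₂ y₁ y₃ ∧ t y₁ y₂ y₃ = t y₁ y₃ y₂)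
    (hequiv : ∀ (x : g₀) (y₁ y₂ y₃ : g₁),
      ⁅x, t y₁ y₂ y₃⁆ = t ⁅x, y₁⁆ y₂ y₃ + t y₁ ⁅x, y₂⁆ y₃ + t y₁ y₂ ⁅x, y₃⁆)
    (hfund : ∀ y₁ y₂ y₃ y₄ : g₁,
      ⁅t y₂ y₃ y₄, y₁⁆ + ⁅t y₁ y₃ y₄, y₂⁆ + ⁅t y₁ y₂ y₄, y₃⁆ + ⁅t y₁ y₂ y₃, y₄⁆
        = (0 : g₁))
    (q : ℂ) (hq3 : q ^ 3 = 1) (hq1 : q ≠ 1)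
    (𝒜 : ZMod 3 → Submodule ℂ (UEnv t)) [GradedAlgebra 𝒜]
    (h0 : ∀ x : g₀, envι t ((x, 0) : g₀ × g₁) ∈ 𝒜 0)
    (h1 : ∀ y : g₁, envι t ((0, y) : g₀ × g₁) ∈ 𝒜 1)
    (m : (UEnv t ⊗[ℂ] UEnv t) →ₗ[ℂ] (UEnv t ⊗[ℂ] UEnv t) →ₗ[ℂ]
      (UEnv t ⊗[ℂ] UEnv t))
    (hm : IsTwistedMul t 𝒜 q m) :
    ∃! Δ : UEnv t →ₗ[ℂ] (UEnv t ⊗[ℂ] UEnv t),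
      Δ 1 = (1 : UEnv t) ⊗ₜ[ℂ] (1 : UEnv t) ∧
      (∀ u v : UEnv t, Δ (u * v) = m (Δ u) (Δ v)) ∧
      (∀ z : g₀ × g₁,
        Δ (envι t z) = envι t z ⊗ₜ[ℂ] (1 : UEnv t) + (1 : UEnv t) ⊗ₜ[ℂ] envι t z) :=
  coproduct_exists_unique_general t q hq3 hq1 𝒜 h0 h1 m hm
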